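/- For every unit vector ψ ∈ ℂ⁴⊗ℂ⁴ there exist nonnegative reals p_{(i,i')} for (i,i') ∈ {0,1}² with Σ_{(i,i')} p_{(i,i')} = 1 and density matrices κ_{(i,i')} on ℂ⁴, neither depending on (x₀,x₁), such that for every (x₀,x₁) ∈ {0,1}²: (F_{(x₀,x₁)} ⊗ id)(|ψ⟩⟨ψ|) = Σ_{(i,i')∈{0,1}²} p_{(i,i')}·(I₂/2) ⊗ |x_{i⊕i'} ⊕ i'⟩⟨x_{i⊕i'} ⊕ i'| ⊗ κ_{(i,i')}. -/

import Mathlib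

open Matrix Kronecker ComplexOrder

/-- The square root of a positive semidefinite matrix, as `Matrix.PosSemidef.sqrt` was
defined in the older Mathlib (removed since). -/
noncomputable def posSemidefSqrt {n : Type*} [Fintype n] [DecidableEq n] {A : Matrix n n ℂ}
    (hA : A.PosSemidef) : Matrix n n ℂ :=
  (hA.1.eigenvectorUnitary : Matrix n n ℂ) *
    diagonal ((↑) ∘ Real.sqrt ∘ hA.1.eigenvalues) * (star hA.1.eigenvectorUnitary : Matrix n n ℂ)

/-- The trace norm `‖A‖₁ = Tr √(Aᴴ A)` of a complex matrix. -/
noncomputable def traceNorm {n : Type*} [Fintype n] [DecidableEq n] (A : Matrix n n ℂ) : ℝ :=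
  ((posSemidefSqrt (Matrix.posSemidef_conjTranspose_mul_self A)).trace).re

/-- The trace distance `Δ(ρ,σ) = ‖ρ - σ‖₁ / 2`. -/
noncomputable def traceDist {n : Type*} [Fintype n] [DecidableEq n] (ρ σ : Matrix n n ℂ) : ℝ :=
  traceNorm (ρ - σ) / 2

open scoped Classical in
/-- Positive semidefinite square root (junk value `0` on non-PSD matrices). -/
noncomputable def psdSqrt {n : Type*} [Fintype n] [DecidableEq n] (A : Matrix n n ℂ) :
    Matrix n n ℂ :=
  if h : A.PosSemidef then posSemidefSqrt h else 0

/-- The fidelity `F(ρ,σ) = ‖√ρ √σ‖₁`. -/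
noncomputable def fidelity {n : Type*} [Fintype n] [DecidableEq n] (ρ σ : Matrix n n ℂ) : ℝ :=
  traceNorm (psdSqrt ρ * psdSqrt σ)

/-- A density matrix: positive semidefinite with trace 1. -/
def IsDensityMatrix {n : Type*} [Fintype n] [DecidableEq n] (ρ : Matrix n n ℂ) : Prop :=
  ρ.PosSemidef ∧ ρ.trace = 1

/-- The projector `|b⟩⟨b|` on ℂ². -/
noncomputable def proj (b : Bool) : Matrix Bool Bool ℂ := Matrix.single b b 1

/-- The strong oblivious transfer channel `F_{(x₀,x₁)}`. -/
noncomputable def sotChannel (x₀ x₁ : Bool) (ρ : Matrix (Bool × Bool) (Bool × Bool) ℂ) :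
    Matrix (Bool × Bool) (Bool × Bool) ℂ :=
  ∑ i : Bool, ∑ i' : Bool,
    ρ (i, i') (i, i') •
      (((1/2 : ℂ) • (1 : Matrix Bool Bool ℂ)) ⊗ₖ proj (xor (bif xor i i' then x₁ else x₀) i'))

/-- The strong oblivious transfer channel extended by the identity on a
4-dimensional reference register. -/
noncomputable def sotChannelExt (x₀ x₁ : Bool)
    (ρ : Matrix ((Bool × Bool) × Fin 4) ((Bool × Bool) × Fin 4) ℂ) :
    Matrix ((Bool × Bool) × Fin 4) ((Bool × Bool) × Fin 4) ℂ :=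
  ∑ a : Bool × Bool,
    (((1/2 : ℂ) • (1 : Matrix Bool Bool ℂ)) ⊗ₖ
        proj (xor (bif xor a.1 a.2 then x₁ else x₀) a.2)) ⊗ₖ
      (Matrix.of fun r s : Fin 4 => ρ (a, r) (a, s))

/-! The channel only reads the diagonal blocks `B_a = ⟨a|ρ|a⟩` of its input, and acts on each of
them as a tensor factor. Every diagonal block of a density matrix `ρ` is positive semidefinite,
hence equals `p_a • κ_a` with `p_a = Tr B_a ≥ 0` and `κ_a` a density matrix (any one when
`B_a = 0`); the weights sum to `Tr ρ = 1`. Neither `p` nor `κ` involves the classical inputs `x₀, x₁`. -/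

lemma Matrix.PosSemidef.exists_isDensityMatrix_smul_eq {n : Type*} [Fintype n] [DecidableEq n]
    [Nonempty n] {B : Matrix n n ℂ} (hB : B.PosSemidef) :
    ∃ κ, IsDensityMatrix κ ∧ B = B.trace.re • κ := by
  by_cases htr : B.trace = 0
  · refine ⟨(Fintype.card n : ℂ)⁻¹ • 1, ⟨PosSemidef.one.smul (by positivity), ?_⟩, ?_⟩
    · simp [trace_smul]
    · simp [hB.trace_eq_zero_iff.mp htr]
  · refine ⟨B.trace⁻¹ • B, ⟨hB.smul (inv_nonneg.mpr hB.trace_nonneg), ?_⟩, ?_⟩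
    · rw [trace_smul, smul_eq_mul, inv_mul_cancel₀ htr]
    · rw [← Complex.coe_smul, ← Complex.eq_re_of_ofReal_le hB.trace_nonneg, smul_smul,
        mul_inv_cancel₀ htr, one_smul]

theorem Matrix.sum_trace_submatrix_prodMk {α β : Type*} [Fintype α] [Fintype β]
    (ρ : Matrix (α × β) (α × β) ℂ) :
    ∑ a, (ρ.submatrix (Prod.mk a) (Prod.mk a)).trace = ρ.trace := by
  simp [trace, Fintype.sum_prod_type]

theorem IsDensityMatrix.exists_submatrix_prodMk_eq_smul {α β : Type*} [Fintype α] [DecidableEq α]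
    [Fintype β] [DecidableEq β] [Nonempty β] {ρ : Matrix (α × β) (α × β) ℂ}
    (hρ : IsDensityMatrix ρ) :
    ∃ (p : α → ℝ) (κ : α → Matrix β β ℂ), (∀ a, 0 ≤ p a) ∧ ∑ a, p a = 1 ∧
      (∀ a, IsDensityMatrix (κ a)) ∧ ∀ a, ρ.submatrix (Prod.mk a) (Prod.mk a) = p a • κ a := by
  have hblock a := hρ.1.submatrix (Prod.mk a)
  choose κ hκ hdecomp using fun a => (hblock a).exists_isDensityMatrix_smul_eq
  refine ⟨fun a => (ρ.submatrix (Prod.mk a) (Prod.mk a)).trace.re, κ,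
    fun a => Complex.nonneg_iff.mp (hblock a).trace_nonneg |>.1, ?_, hκ, hdecomp⟩
  rw [← Complex.re_sum, sum_trace_submatrix_prodMk, hρ.2, Complex.one_re]

/-- Structure of the output of the extended strong oblivious transfer channel on
a pure input state `|ψ⟩⟨ψ|`. -/
theorem stmt_11 (ψ : (Bool × Bool) × Fin 4 → ℂ) (hψ : star ψ ⬝ᵥ ψ = 1) :
    ∃ (p : Bool × Bool → ℝ) (κ : Bool × Bool → Matrix (Fin 4) (Fin 4) ℂ),
      (∀ a, 0 ≤ p a) ∧ (∑ a : Bool × Bool, p a = 1) ∧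
      (∀ a, IsDensityMatrix (κ a)) ∧
      ∀ x₀ x₁ : Bool,
        sotChannelExt x₀ x₁ (Matrix.vecMulVec ψ (star ψ)) =
          ∑ a : Bool × Bool, p a •
            ((((1/2 : ℂ) • (1 : Matrix Bool Bool ℂ)) ⊗ₖ
                proj (xor (bif xor a.1 a.2 then x₁ else x₀) a.2)) ⊗ₖ κ a) := by
  have hpure : IsDensityMatrix (vecMulVec ψ (star ψ)) :=
    ⟨posSemidef_vecMulVec_self_star ψ, by rw [trace_vecMulVec, dotProduct_comm, hψ]⟩
  obtain ⟨p, κ, hp, hsum, hκ, hblock⟩ := hpure.exists_submatrix_prodMk_eq_smul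
  refine ⟨p, κ, hp, hsum, hκ, fun x₀ x₁ => Finset.sum_congr rfl fun a _ => ?_⟩
  rw [← kronecker_smul, ← hblock a]
  rfl
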